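/- For every real a with 0 < a < 6^{1/3}, the limit inferior, as n → ∞, of (ln f(n)) / (n^{1/3}·ln n) is at least a/3; equivalently, f(n) ≥ exp((a/3 + o(1))·n^{1/3}·ln n) as n → ∞. -/

import Mathlib

open Filter Real

/-- A Wilf partition: the multiplicities of distinct parts are all different. -/
def IsWilf {n : ℕ} (P : n.Partition) : Prop :=
  ∀ p ∈ P.parts, ∀ q ∈ P.parts,
    Multiset.count p P.parts = Multiset.count q P.parts → p = q

/-- `wilfCount n` is the number of Wilf partitions of `n`. -/
noncomputable def wilfCount (n : ℕ) : ℕ :=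
  Nat.card {P : n.Partition // IsWilf P}

/-!
A permutation `σ` of `Fin N` gives a Wilf partition of `n`: part `i + 2` repeated `N + 1 - σ i`
times, completed by ones. If `σ` is block-diagonal with `q` blocks of size `w` (`N = q w`), then
`σ i > i - w`, so the large parts occur rarely and the construction fits into `n` as soon as
`(N + 3)^3 + 3 w (N + 3)^2 ≤ 6 n`; there are `(w!)^q` such `σ`. Taking `w ≈ γ n^(1/3)` with `(qγ)^3 (1 + 3/q) < 6` gives
`log f(n) ≥ (qγ/3 + o(1)) n^(1/3) log n`, and `qγ` can be brought arbitrarily close to `6^(1/3)`.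

A matching upper bound `log f(n) = O(n^(1/3) log n)` is needed because `liminf` of a sequence
that is not bounded above is a junk value. It holds because a Wilf partition with `k` distinct
parts has `k^3 ≤ 27 n` (at least `k/3` of its parts are `≥ k/3` and occur `≥ k/3` times), and
it is determined by the `k` pairs `(b, count b)`.
-/

open Finset
open scoped Nat

section MultiplicityVectors

variable {N : ℕ}

def shiftedWeight (m : Fin N → ℕ) : ℕ := ∑ i : Fin N, ((i : ℕ) + 2) * m i

def shiftedParts (n : ℕ) (m : Fin N → ℕ) : Multiset ℕ :=
  Multiset.replicate (n - shiftedWeight m) 1 +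
    ∑ i : Fin N, Multiset.replicate (m i) ((i : ℕ) + 2)

lemma count_one_shiftedParts (n : ℕ) (m : Fin N → ℕ) :
    (shiftedParts n m).count 1 = n - shiftedWeight m := by
  simp [shiftedParts, Multiset.count_sum', Multiset.count_replicate]

lemma count_shiftedParts (n : ℕ) (m : Fin N → ℕ) (i : Fin N) :
    (shiftedParts n m).count ((i : ℕ) + 2) = m i := by
  simp [shiftedParts, Multiset.count_sum', Multiset.count_replicate, Fin.val_inj]

lemma mem_shiftedParts {n : ℕ} {m : Fin N → ℕ} {x : ℕ} (hx : x ∈ shiftedParts n m) :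
    x = 1 ∨ ∃ i : Fin N, x = (i : ℕ) + 2 := by
  simp only [shiftedParts, Multiset.mem_add, Multiset.mem_sum, Finset.mem_univ, true_and] at hx
  rcases hx with hx | ⟨i, hi⟩
  · exact .inl (Multiset.eq_of_mem_replicate hx)
  · exact .inr ⟨i, Multiset.eq_of_mem_replicate hi⟩

lemma sum_shiftedParts {n : ℕ} {m : Fin N → ℕ} (h : shiftedWeight m ≤ n) :
    (shiftedParts n m).sum = n := by
  simp only [shiftedParts, Multiset.sum_add, Multiset.sum_replicate, Multiset.sum_sum,
    smul_eq_mul, mul_one]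
  simp only [shiftedWeight, mul_comm] at h ⊢
  omega

def shiftedPartition (n : ℕ) (m : Fin N → ℕ) (h : shiftedWeight m ≤ n) : n.Partition where
  parts := shiftedParts n m
  parts_pos hx := by rcases mem_shiftedParts hx with rfl | ⟨i, rfl⟩ <;> omega
  parts_sum := sum_shiftedParts h

/-- The ones occur more than `K` times, so their multiplicity differs from every `m i`. -/
lemma isWilf_shiftedPartition {n K : ℕ} {m : Fin N → ℕ} (hm : Function.Injective m)
    (hK : ∀ i, m i ≤ K) (h : shiftedWeight m + K < n) :
    IsWilf (shiftedPartition n m (by omega)) := by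
  intro p hp p' hp' hpp'
  simp only [shiftedPartition] at hp hp' hpp'
  rcases mem_shiftedParts hp with rfl | ⟨i, rfl⟩ <;>
    rcases mem_shiftedParts hp' with rfl | ⟨i', rfl⟩ <;>
    simp only [count_one_shiftedParts, count_shiftedParts] at hpp'
  · rfl
  · have := hK i'; omega
  · have := hK i; omega
  · rw [hm hpp']

theorem card_le_wilfCount {ι : Type*} [Finite ι] {n K : ℕ} (m : ι → Fin N → ℕ)
    (hm : Function.Injective m) (hinj : ∀ j, Function.Injective (m j))
    (hK : ∀ j i, m j i ≤ K) (h : ∀ j, shiftedWeight (m j) + K < n) :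
    Nat.card ι ≤ wilfCount n := by
  refine Nat.card_le_card_of_injective
    (fun j ↦ ⟨shiftedPartition n (m j) (by have := h j; omega),
      isWilf_shiftedPartition (hinj j) (hK j) (h j)⟩) fun j j' hjj' ↦ hm ?_
  funext i
  have := congrArg (fun P : {P : n.Partition // IsWilf P} ↦ P.1.parts.count ((i : ℕ) + 2)) hjj'
  simpa only [shiftedPartition, count_shiftedParts] using this

end MultiplicityVectors

section BlockPerm

variable {q w : ℕ}

def blockPerm (f : Fin q → Equiv.Perm (Fin w)) : Equiv.Perm (Fin (q * w)) :=
  finProdFinEquiv.permCongr (Equiv.prodShear (Equiv.refl _) f)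

lemma blockPerm_finProdFinEquiv (f : Fin q → Equiv.Perm (Fin w)) (t : Fin q) (r : Fin w) :
    blockPerm f (finProdFinEquiv (t, r)) = finProdFinEquiv (t, f t r) := by
  simp [blockPerm, Equiv.permCongr_apply]

lemma blockPerm_injective : Function.Injective (blockPerm (q := q) (w := w)) := by
  intro f g hfg
  funext t
  refine Equiv.ext fun r ↦ ?_
  have := congrArg (fun σ ↦ σ (finProdFinEquiv (t, r))) hfg
  simpa [blockPerm_finProdFinEquiv] using this

lemma lt_blockPerm_add (f : Fin q → Equiv.Perm (Fin w)) (i : Fin (q * w)) :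
    (i : ℕ) < blockPerm f i + w := by
  obtain ⟨⟨t, r⟩, rfl⟩ := finProdFinEquiv.surjective i
  rw [blockPerm_finProdFinEquiv]
  simp only [finProdFinEquiv_apply_val]
  have := r.isLt
  omega

end BlockPerm

lemma six_mul_sum_range_mul_sub (N w : ℕ) :
    6 * ∑ i ∈ range N, (i + 2) * (N + w - i) = N * (N + 1) * (N + 5) + 3 * w * N * (N + 3) := by
  have key (a : ℤ) : 6 * ∑ i ∈ range N, ((i : ℤ) + 2) * (a - i) =
      3 * a * N * (N + 3) - N * (N - 1) * (2 * N + 5) := by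
    induction N with
    | zero => simp
    | succ N ih => rw [sum_range_succ, mul_add, ih]; push_cast; ring
  zify
  rw [sum_congr rfl fun i hi ↦ by rw [Nat.cast_sub (by simp at hi; omega)], key]
  push_cast
  ring

lemma six_mul_shiftedWeight_le {N w : ℕ} (σ : Equiv.Perm (Fin N))
    (hσ : ∀ i : Fin N, (i : ℕ) < σ i + w) :
    6 * shiftedWeight (fun i ↦ N + 1 - σ i) ≤ N * (N + 1) * (N + 5) + 3 * w * N * (N + 3) := by
  rw [← six_mul_sum_range_mul_sub, shiftedWeight,
    ← Fin.sum_univ_eq_sum_range (fun i ↦ (i + 2) * (N + w - i))]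
  refine Nat.mul_le_mul_left 6 (sum_le_sum fun i _ ↦ Nat.mul_le_mul_left _ ?_)
  have := hσ i
  omega

theorem pow_factorial_le_wilfCount {n q w : ℕ}
    (h : (q * w + 3) ^ 3 + 3 * w * (q * w + 3) ^ 2 ≤ 6 * n) : w ! ^ q ≤ wilfCount n := by
  have hcard : Nat.card (Fin q → Equiv.Perm (Fin w)) = w ! ^ q := by
    simp [Nat.card_eq_fintype_card, Fintype.card_perm]
  rw [← hcard]
  refine card_le_wilfCount (K := q * w + 1) (fun f i ↦ q * w + 1 - blockPerm f i)
    (fun f g hfg ↦ blockPerm_injective (Equiv.ext fun i ↦ Fin.ext ?_))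
    (fun f i j hij ↦ (blockPerm f).injective (Fin.ext ?_)) (fun _ _ ↦ Nat.sub_le _ _)
    fun f ↦ ?_
  · have := congrFun hfg i
    dsimp only at this
    have := (blockPerm f i).isLt
    have := (blockPerm g i).isLt
    omega
  · dsimp only at hij
    have := (blockPerm f i).isLt
    have := (blockPerm f j).isLt
    omega
  · have := six_mul_shiftedWeight_le (blockPerm f) (lt_blockPerm_add f)
    generalize shiftedWeight _ = W at *
    generalize q * w = N at *
    nlinarith

lemma card_filter_lt_le_of_injOn {α : Type*} {s : Finset α} {f : α → ℕ} (hf : Set.InjOn f s)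
    (hpos : ∀ x ∈ s, 0 < f x) (h : ℕ) : #{x ∈ s | f x < h} ≤ h - 1 := by
  simpa using card_le_card_of_injOn f (t := Ioo 0 h)
    (fun x hx ↦ by
      simp only [coe_filter, Set.mem_ofPred_eq] at hx
      simpa using ⟨hpos x hx.1, hx.2⟩)
    (hf.mono (coe_subset.2 (filter_subset _ _)))

theorem IsWilf.card_toFinset_pow_three_le {n : ℕ} {P : n.Partition} (hP : IsWilf P) :
    #P.parts.toFinset ^ 3 ≤ 27 * n := by
  set D := P.parts.toFinset
  set h := (#D + 2) / 3
  set A := {b ∈ D | h ≤ P.parts.count b}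
  set B := {b ∈ A | h ≤ b}
  have hA : #D ≤ #A + (h - 1) := by
    have hlt := card_filter_lt_le_of_injOn (s := D) (f := P.parts.count)
      (fun b hb b' hb' ↦ hP b (Multiset.mem_toFinset.1 hb) b' (Multiset.mem_toFinset.1 hb'))
      (fun b hb ↦ Multiset.count_pos.2 (Multiset.mem_toFinset.1 hb)) h
    have := card_filter_add_card_filter_not (s := D) (fun b ↦ h ≤ P.parts.count b)
    change #A + _ = _ at this
    simp only [not_le] at this
    omega
  have hB : #A ≤ #B + (h - 1) := by
    have hlt := card_filter_lt_le_of_injOn (s := A) (f := id) (Set.injOn_id _)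
      (fun b hb ↦ P.parts_pos (by simpa [A, D] using (mem_filter.1 hb).1)) h
    have := card_filter_add_card_filter_not (s := A) (fun b ↦ h ≤ b)
    change #B + _ = _ at this
    simp only [not_le, id] at this hlt
    omega
  have hsum : #B * (h * h) ≤ n := calc
    #B * (h * h) = ∑ b ∈ B, h * h := by simp
    _ ≤ ∑ b ∈ B, b * P.parts.count b := sum_le_sum fun b hb ↦ by
        simp only [B, A, mem_filter] at hb
        exact Nat.mul_le_mul hb.2 hb.1.2
    _ ≤ ∑ b ∈ D, b * P.parts.count b :=
        sum_le_sum_of_subset ((filter_subset _ _).trans (filter_subset _ _))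
    _ = n := by
        simpa [D, mul_comm, P.parts_sum] using (sum_multiset_count P.parts).symm
  have hhB : h ≤ #B := by omega
  have hD : #D ≤ 3 * h := by omega
  calc #D ^ 3 ≤ (3 * h) ^ 3 := by gcongr
    _ = 27 * (h * (h * h)) := by ring
    _ ≤ 27 * n := by gcongr; exact (Nat.mul_le_mul_right _ hhB).trans hsum

lemma card_powerset_filter_card_le {α : Type*} [DecidableEq α] (T : Finset α) (K : ℕ) :
    #{s ∈ T.powerset | #s ≤ K} ≤ (K + 1) * (#T + 1) ^ K := calc
  #{s ∈ T.powerset | #s ≤ K} ≤ #((range (K + 1)).biUnion T.powersetCard) :=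
      card_le_card fun s hs ↦ by
        simp only [mem_filter, mem_powerset] at hs
        simp only [mem_biUnion, mem_range, mem_powersetCard]
        exact ⟨#s, by omega, hs.1, rfl⟩
  _ ≤ ∑ j ∈ range (K + 1), #(T.powersetCard j) := card_biUnion_le
  _ ≤ ∑ j ∈ range (K + 1), (#T + 1) ^ K := sum_le_sum fun j hj ↦ by
      rw [card_powersetCard]
      calc (#T).choose j ≤ #T ^ j := Nat.choose_le_pow _ _
        _ ≤ (#T + 1) ^ j := by gcongr; omega
        _ ≤ (#T + 1) ^ K := Nat.pow_le_pow_right (by omega) (by simpa [Nat.lt_succ_iff] using hj)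
  _ = (K + 1) * (#T + 1) ^ K := by simp

lemma Nat.Partition.count_le {n : ℕ} (P : n.Partition) (b : ℕ) : P.parts.count b ≤ n := by
  have := Multiset.card_nsmul_le_sum (s := P.parts) (a := 1) fun _ hx ↦ P.parts_pos hx
  simp only [smul_eq_mul, mul_one, P.parts_sum] at this
  exact (Multiset.count_le_card _ _).trans this

theorem wilfCount_le {n K : ℕ} (hK : ∀ P : n.Partition, IsWilf P → #P.parts.toFinset ≤ K) :
    wilfCount n ≤ (K + 1) * ((n + 1) ^ 2 + 1) ^ K := by
  set T := range (n + 1) ×ˢ range (n + 1)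
  set S := {s ∈ T.powerset | #s ≤ K}
  have hgraph (P : {P : n.Partition // IsWilf P}) : (Multiset.toFinsupp P.1.parts).graph ∈ S := by
    simp only [S, mem_filter, mem_powerset]
    refine ⟨fun ⟨b, c⟩ hbc ↦ ?_, by simpa [Finsupp.graph] using hK P.1 P.2⟩
    obtain ⟨rfl, hc⟩ := Finsupp.mk_mem_graph_iff.1 hbc
    simp only [Multiset.toFinsupp_apply] at hc ⊢
    have hb := P.1.le_of_mem_parts (Multiset.count_ne_zero.1 hc)
    simp only [T, mem_product, mem_range]
    exact ⟨by omega, by have := P.1.count_le b; omega⟩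
  calc wilfCount n ≤ Nat.card S := Nat.card_le_card_of_injective
        (fun P ↦ ⟨_, hgraph P⟩) fun P Q hPQ ↦ Subtype.ext <| Nat.Partition.ext <|
          Multiset.toFinsupp.injective <| Finsupp.graph_injective _ _ <| congrArg Subtype.val hPQ
    _ = #S := Nat.card_eq_finsetCard S
    _ ≤ (K + 1) * (#T + 1) ^ K := card_powerset_filter_card_le T K
    _ = (K + 1) * ((n + 1) ^ 2 + 1) ^ K := by simp [T, sq]

section Asymptotics

open Topology

lemma rpow_one_third_pow_three {x : ℝ} (hx : 0 ≤ x) : (x ^ ((1 : ℝ) / 3)) ^ 3 = x := by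
  rw [← Real.rpow_natCast, ← Real.rpow_mul hx]
  norm_num

lemma exists_block_params {a : ℝ} (ha : a < (6 : ℝ) ^ ((1 : ℝ) / 3)) :
    ∃ (q : ℕ) (γ : ℝ), 0 < γ ∧ a < q * γ ∧
      (q * γ) ^ 3 + 3 * γ * (q * γ) ^ 2 < 6 := by
  obtain ⟨c, hac, hc6⟩ := exists_between (max_lt ha (by positivity))
  have hc0 : 0 < c := (le_max_right _ _).trans_lt hac
  have hc3 : c ^ 3 < 6 := calc
    c ^ 3 < ((6 : ℝ) ^ ((1 : ℝ) / 3)) ^ 3 := pow_lt_pow_left₀ hc6 hc0.le (by norm_num)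
    _ = 6 := rpow_one_third_pow_three (by norm_num)
  obtain ⟨q, hq⟩ := exists_nat_gt (3 * c ^ 3 / (6 - c ^ 3))
  have hq0 : (0 : ℝ) < q := lt_of_le_of_lt (div_nonneg (by positivity) (by linarith)) hq
  refine ⟨q, c / q, by positivity, ?_, ?_⟩
  · rw [mul_div_cancel₀ _ hq0.ne']
    exact (le_max_left _ _).trans_lt hac
  · rw [div_lt_iff₀ (by linarith)] at hq
    have : 3 * (c / q) * c ^ 2 < 6 - c ^ 3 := by
      rw [show 3 * (c / q) * c ^ 2 = 3 * c ^ 3 / q by ring, div_lt_iff₀ hq0]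
      linarith
    rw [mul_div_cancel₀ _ hq0.ne']
    linarith

lemma eventually_cubic_le {c d : ℝ} (h : c ^ 3 + 3 * d * c ^ 2 < 6) :
    ∀ᶠ y in atTop, (c * y + 3) ^ 3 + 3 * (d * y) * (c * y + 3) ^ 2 ≤ 6 * y ^ 3 := by
  have hF : Tendsto (fun t : ℝ ↦ (c + 3 * t) ^ 3 + 3 * d * (c + 3 * t) ^ 2) (𝓝 0)
      (𝓝 (c ^ 3 + 3 * d * c ^ 2)) := by
    have : Continuous (fun t : ℝ ↦ (c + 3 * t) ^ 3 + 3 * d * (c + 3 * t) ^ 2) := by fun_prop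
    simpa using this.tendsto 0
  filter_upwards [(hF.comp tendsto_inv_atTop_zero).eventually (gt_mem_nhds h),
    eventually_gt_atTop 0] with y hy hy0
  simp only [Function.comp_apply] at hy
  have : (c * y + 3) ^ 3 + 3 * (d * y) * (c * y + 3) ^ 2 =
      y ^ 3 * ((c + 3 * y⁻¹) ^ 3 + 3 * d * (c + 3 * y⁻¹) ^ 2) := by
    field_simp
  rw [this]
  nlinarith [pow_pos hy0 3]

lemma mul_log_sub_le_log_factorial (n : ℕ) : n * log n - n ≤ log n ! := by
  rcases eq_or_ne n 0 with rfl | hn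
  · simp
  have := Stirling.le_log_factorial_stirling hn
  have : 0 ≤ log n := Real.log_natCast_nonneg n
  have : 0 ≤ log (2 * π) := Real.log_nonneg (by linarith [Real.pi_gt_three])
  linarith

lemma tendsto_floor_mul_log_div {γ : ℝ} (hγ : 0 < γ) :
    Tendsto (fun y : ℝ ↦ (⌊γ * y⌋₊ * log ⌊γ * y⌋₊ - ⌊γ * y⌋₊) / (y * log y))
      atTop (𝓝 γ) := by
  have hr := tendsto_nat_floor_mul_div_atTop hγ.le
  have hinv : Tendsto (fun y ↦ (log y)⁻¹) atTop (𝓝 0) := tendsto_log_atTop.inv_tendsto_atTop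
  have := (hr.mul (((hr.log hγ.ne').mul hinv).add (tendsto_const_nhds (x := (1 : ℝ))))).sub
    (hr.mul hinv)
  simp only [mul_zero, zero_add, mul_one, sub_zero] at this
  refine this.congr' ?_
  filter_upwards [(tendsto_id.const_mul_atTop hγ).eventually_ge_atTop 1, eventually_gt_atTop 1]
    with y hW hy
  have hW : (0 : ℝ) < ⌊γ * y⌋₊ := by
    have : 1 ≤ ⌊γ * y⌋₊ := Nat.le_floor (by simpa using hW)
    positivity
  have hlog : 0 < log y := Real.log_pos hy
  rw [Real.log_div hW.ne' (by linarith)]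
  field_simp
  ring

theorem eventually_lt_log_wilfCount_div {a : ℝ} (ha : a < (6 : ℝ) ^ ((1 : ℝ) / 3)) :
    ∀ᶠ n : ℕ in atTop, a / 3 < log (wilfCount n) / ((n : ℝ) ^ ((1 : ℝ) / 3) * log n) := by
  obtain ⟨q, γ, hγ, haq, hcube⟩ := exists_block_params ha
  have hy : Tendsto (fun n : ℕ ↦ (n : ℝ) ^ ((1 : ℝ) / 3)) atTop atTop :=
    (tendsto_rpow_atTop (by norm_num)).comp tendsto_natCast_atTop_atTop
  have hratio := ((tendsto_floor_mul_log_div hγ).const_mul (q / 3 : ℝ)).eventually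
    (lt_mem_nhds (show a / 3 < q / 3 * γ by linarith))
  filter_upwards [hy.eventually (eventually_cubic_le hcube), hy.eventually hratio,
    eventually_gt_atTop 1] with n hcub hlim hn
  set y := (n : ℝ) ^ ((1 : ℝ) / 3)
  set W := ⌊γ * y⌋₊
  have hn' : (1 : ℝ) < n := by exact_mod_cast hn
  have hy0 : 0 < y := by positivity
  have hlog : log n = 3 * log y := by rw [Real.log_rpow (by positivity)]; ring
  have hWy : (W : ℝ) ≤ γ * y := Nat.floor_le (by positivity)
  have hcount : W ! ^ q ≤ wilfCount n := by
    apply pow_factorial_le_wilfCount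
    have : ((q : ℝ) * W + 3) ^ 3 + 3 * W * ((q : ℝ) * W + 3) ^ 2 ≤ 6 * n := calc
      _ ≤ (q * γ * y + 3) ^ 3 + 3 * (γ * y) * (q * γ * y + 3) ^ 2 := by
          have : (q : ℝ) * W ≤ q * γ * y := by rw [mul_assoc]; gcongr
          gcongr
      _ ≤ 6 * y ^ 3 := hcub
      _ = 6 * n := by rw [rpow_one_third_pow_three (by positivity)]
    exact_mod_cast this
  have hlogf : q * (W * log W - W) ≤ log (wilfCount n) := calc
    q * (W * log W - W) ≤ q * log (W !) := by gcongr; exact mul_log_sub_le_log_factorial W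
    _ = log ((W ! ^ q : ℕ) : ℝ) := by push_cast; rw [Real.log_pow]
    _ ≤ log (wilfCount n) := Real.log_le_log (by positivity) (by exact_mod_cast hcount)
  have hlogy : 0 < log y := by linarith [Real.log_pos hn']
  calc a / 3 < q / 3 * ((W * log W - W) / (y * log y)) := hlim
    _ = q * (W * log W - W) / (y * log n) := by rw [hlog]; field_simp
    _ ≤ log (wilfCount n) / (y * log n) := by gcongr

theorem eventually_log_wilfCount_div_le :
    ∀ᶠ n : ℕ in atTop, log (wilfCount n) / ((n : ℝ) ^ ((1 : ℝ) / 3) * log n) ≤ 12 := by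
  filter_upwards [(tendsto_log_atTop.comp tendsto_natCast_atTop_atTop).eventually_ge_atTop 1,
    eventually_ge_atTop 3] with n hlog hn
  simp only [Function.comp_apply] at hlog
  set y := (n : ℝ) ^ ((1 : ℝ) / 3)
  set K := ⌊3 * y⌋₊
  have hy0 : 0 < y := by positivity
  have hK (P : n.Partition) (hP : IsWilf P) : #P.parts.toFinset ≤ K := by
    refine Nat.le_floor (le_of_pow_le_pow_left₀ (by norm_num : (3 : ℕ) ≠ 0)
      (by positivity) ?_)
    rw [mul_pow, rpow_one_third_pow_three (by positivity)]
    exact_mod_cast hP.card_toFinset_pow_three_le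
  have hKy : (K : ℝ) ≤ 3 * y := Nat.floor_le (by positivity)
  rcases Nat.eq_zero_or_pos (wilfCount n) with h0 | hpos
  · simp [h0]
  have hM : ((n : ℝ) + 1) ^ 2 + 1 ≤ (n : ℝ) ^ 3 := by
    have : (3 : ℝ) ≤ n := by exact_mod_cast hn
    nlinarith
  rw [div_le_iff₀ (by positivity)]
  calc log (wilfCount n) ≤ log (((K + 1) * ((n + 1) ^ 2 + 1) ^ K : ℕ) : ℝ) :=
        Real.log_le_log (by exact_mod_cast hpos) (by exact_mod_cast wilfCount_le hK)
    _ = log (K + 1) + K * log (((n : ℝ) + 1) ^ 2 + 1) := by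
        push_cast
        rw [Real.log_mul (by positivity) (by positivity), Real.log_pow]
    _ ≤ K + K * (3 * log n) := by
        gcongr
        · linarith [Real.log_le_sub_one_of_pos (show (0 : ℝ) < K + 1 by positivity)]
        · exact (Real.log_le_log (by positivity) hM).trans_eq (by rw [Real.log_pow]; norm_num)
    _ ≤ 12 * (y * log n) := by nlinarith

end Asymptotics

theorem stmt15_general (a : ℝ) (ha : a < (6 : ℝ) ^ ((1 : ℝ) / 3)) :
    a / 3 ≤
      Filter.liminf
        (fun n : ℕ => Real.log (wilfCount n) / ((n : ℝ) ^ ((1 : ℝ) / 3) * Real.log n))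
        Filter.atTop :=
  le_liminf_of_le (isCoboundedUnder_ge_of_eventually_le _ eventually_log_wilfCount_div_le)
    ((eventually_lt_log_wilfCount_div ha).mono fun _ h ↦ h.le)

theorem stmt15 (a : ℝ) (ha0 : 0 < a) (ha : a < (6 : ℝ) ^ ((1 : ℝ) / 3)) :
    a / 3 ≤
      Filter.liminf
        (fun n : ℕ => Real.log (wilfCount n) / ((n : ℝ) ^ ((1 : ℝ) / 3) * Real.log n))
        Filter.atTop :=
  stmt15_general a ha
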